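/- arXiv:0711.3054 — 3 statements merged into one kernel-verified Lean document; each statement's English description precedes it below -/
import Mathlib

section
/- Let S̃_∞ = ∪_{n≥1} S̃_n (via the natural embeddings S̃_n ⊆ S̃_{n+1}) with θ : S̃_∞ → S_∞ the induced homomorphism, and call an element a ∈ S̃_∞ even split if the modified cycle type of θ(a) has all parts even. Fix r ≥ 1 and let 𝒞 be an orbit of the simultaneous conjugation action of S̃_∞ on r-tuples of even split elements of S̃_∞, and let N(𝒞) be the number of points of ℕ moved by at least one of θ(x_1), …, θ(x_r), for any (x_1, …, x_r) ∈ 𝒞 (this number is independent of the choice). Then: (i) 𝒞 ∩ (S̃_n × ⋯ × S̃_n) is empty if n < N(𝒞); (ii) if n ≥ N(𝒞) it is a single orbit of the simultaneous conjugation action of S̃_n; and (iii) there is a positive rational number k(𝒞), independent of n, such that the number of r-tuples in 𝒞 ∩ (S̃_n × ⋯ × S̃_n) equals n(n−1)⋯(n − N(𝒞) + 1)/k(𝒞) for all n ≥ N(𝒞). -/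
/-!
The kernel `{1, z}` of `θ` is central of order two. So if `θ v` commutes with `θ x`, then
`v x v⁻¹ = c x` with `c ∈ {1, z}`; when `θ x` has odd order `L` (as for even split `x`, all of
whose nontrivial cycles have odd length), taking `L`-th powers gives `c x ^ L = x ^ L`, so `c = 1`.

The entries of a tuple `y ∈ 𝒞` lie in `S̃_n` exactly when the `N` points moved by the `θ (y i)`
lie in `{0, …, n - 1}` (the points are numbered from `0`), which gives (i). For (ii), if
`y = u y₀ u⁻¹` with both tuples in `S̃_n`, pick `w ∈ S̃_n` such that `θ w` agrees with `θ u` on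
the points moved by `y₀`; then `θ (w⁻¹ u)` commutes with every `θ (y₀ i)`, hence `w⁻¹ u` commutes
with every `y₀ i` and `y = w y₀ w⁻¹`. For (iii), sort the tuples of `𝒞 ∩ S̃_n^r` by their sets of
moved points. Conjugating by a lift of a permutation shows that each of the `C(n, N)` possible
sets carries the same number `K` of tuples, so the count is
`C(n, N) K = n (n - 1) ⋯ (n - N + 1) / k` with `k = N! / K`.
-/

/-- Generators of `S̃_∞`: `Sum.inl i` is `t_{i+1}` and `Sum.inr ()` is `z`. -/
abbrev SpinGenInf := Sum ℕ Unit

/-- The free-group generator `t_{i+1}`. -/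
def TfI (i : ℕ) : FreeGroup SpinGenInf := FreeGroup.of (Sum.inl i)

/-- The free-group generator `z`. -/
def ZfI : FreeGroup SpinGenInf := FreeGroup.of (Sum.inr ())

/-- The defining relators of `S̃_∞`. -/
def spinRelInf : Set (FreeGroup SpinGenInf) :=
  {w | w = ZfI ^ 2
    ∨ (∃ i, w = ZfI * TfI i * ZfI⁻¹ * (TfI i)⁻¹)
    ∨ (∃ i, w = (TfI i) ^ 2 * ZfI⁻¹)
    ∨ (∃ i j : ℕ, i + 1 = j ∧
        w = TfI i * TfI j * TfI i * (TfI j * TfI i * TfI j)⁻¹)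
    ∨ (∃ i j : ℕ, (i + 1 < j ∨ j + 1 < i) ∧
        w = TfI j * TfI i * (ZfI * TfI i * TfI j)⁻¹)}

/-- `S̃_∞ = ∪_n S̃_n`, as a presented group on the generators `t_1, t_2, …` and `z`. -/
abbrev SpinCoverInf := PresentedGroup spinRelInf

/-- The generator `t_{i+1}` of `S̃_∞`. -/
def tgi (i : ℕ) : SpinCoverInf := PresentedGroup.of (Sum.inl i)

/-- The central element `z` of `S̃_∞`. -/
def zi : SpinCoverInf := PresentedGroup.of (Sum.inr ())

/-- The subgroup `S̃_n ⊆ S̃_∞`, generated by `z` and `t_1, …, t_{n-1}`. -/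
def SpinSub (n : ℕ) : Subgroup SpinCoverInf :=
  Subgroup.closure ({zi} ∪ {x | ∃ i : ℕ, i + 1 < n ∧ x = tgi i})

/-- An element `a ∈ S̃_∞` is even split if all parts of the modified cycle type of
`θ(a)` are even, i.e. every nontrivial cycle of `θ(a)` has odd length. -/
def EvenSplit (θ : SpinCoverInf →* Equiv.Perm ℕ) (a : SpinCoverInf) : Prop :=
  ∀ x : ℕ, θ a x ≠ x → Odd (Set.ncard {y : ℕ | (θ a).SameCycle x y})

open Equiv Set

theorem commute_of_commute_map_of_odd {G H : Type*} [Group G] [Group H] (f : G →* H)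
    (hcen : f.ker ≤ Subgroup.center G) (hsq : ∀ c ∈ f.ker, c * c = 1) {v x : G} {L : ℕ}
    (hL : Odd L) (hxL : f x ^ L = 1) (h : Commute (f v) (f x)) : Commute v x := by
  set c := v * x * v⁻¹ * x⁻¹ with hc_def
  have hc : c ∈ f.ker := by
    rw [MonoidHom.mem_ker, hc_def, map_mul, map_mul, map_mul, map_inv, map_inv, h.eq]
    group
  have hcx : x * c = c * x := Subgroup.mem_center_iff.mp (hcen hc) x
  have hxL_central : v * x ^ L = x ^ L * v :=
    Subgroup.mem_center_iff.mp (hcen (by rwa [MonoidHom.mem_ker, map_pow])) v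
  have hcL : c ^ L = c := by
    obtain ⟨m, rfl⟩ := hL
    rw [pow_succ, pow_mul, sq, hsq c hc, one_pow, one_mul]
  have hc1 : c * x ^ L = x ^ L := by
    calc c * x ^ L = (c * x) ^ L := by rw [(Commute.symm hcx).mul_pow, hcL]
      _ = (v * x * v⁻¹) ^ L := by rw [hc_def]; group
      _ = x ^ L := by rw [conj_pow, hxL_central, mul_inv_cancel_right]
  rw [mul_eq_right, hc_def, mul_inv_eq_one, mul_inv_eq_iff_eq_mul] at hc1
  exact hc1

theorem ncard_eq_choose_mul_of_ncard_fiber {β : Type*} {s : Set β} (hs : s.Finite)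
    (f : β → Set ℕ) {n N K : ℕ} (hf : ∀ y ∈ s, f y ⊆ Iio n ∧ (f y).ncard = N)
    (hK : ∀ T : Finset ℕ, T ⊆ Finset.range n → T.card = N → {y ∈ s | f y = T}.ncard = K) :
    s.ncard = n.choose N * K := by
  classical
  let support (y : β) : Finset ℕ := (Finset.range n).filter (· ∈ f y)
  have hsupport {y} (hy : y ∈ s) : (support y : Set ℕ) = f y := by
    ext p
    simpa [support] using fun hp => (hf y hy).1 hp
  have hfiber (T : Finset ℕ) (hT : T ∈ (Finset.range n).powersetCard N) :
      (hs.toFinset.filter (support · = T)).card = K := by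
    rw [Finset.mem_powersetCard] at hT
    rw [← hK T hT.1 hT.2, ← Set.ncard_coe_finset]
    congr 1
    ext y
    simp only [Finset.coe_filter, Set.Finite.mem_toFinset, mem_ofPred_eq]
    exact and_congr_right fun hy => by rw [← hsupport hy, Finset.coe_inj]
  rw [Set.ncard_eq_toFinset_card _ hs,
    Finset.card_eq_sum_card_fiberwise (t := (Finset.range n).powersetCard N) fun y hy => ?_,
    Finset.sum_congr rfl hfiber, Finset.sum_const, Finset.card_powersetCard, Finset.card_range,
    smul_eq_mul]
  have hy := hs.mem_toFinset.mp hy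
  refine Finset.mem_powersetCard.mpr ⟨fun p hp => ?_, ?_⟩
  · simpa using (hf y hy).1 (by simpa [← hsupport hy] using hp)
  · rw [← ncard_coe_finset, hsupport hy, (hf y hy).2]

namespace Equiv.Perm

variable {α : Type*}

theorem image_setOf_apply_ne (σ π : Perm α) :
    σ '' {p | π p ≠ p} = {p | (σ * π * σ⁻¹) p ≠ p} := by
  ext p
  simp [Equiv.image_eq_preimage_symm, eq_symm_apply]

theorem commute_of_setOf_apply_ne_subset {β π : Perm α} {U : Set α}
    (hπ : {p | π p ≠ p} ⊆ U) (hβ : ∀ p ∈ U, β p = p) : Commute β π :=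
  Disjoint.commute fun p => (em (p ∈ U)).imp (hβ p) fun hp => not_not.mp fun h => hp (hπ h)

theorem ncard_setOf_sameCycle {π : Perm α} {x : α} (hfin : {y | π.SameCycle x y}.Finite) :
    {y | π.SameCycle x y}.ncard = Function.minimalPeriod π x := by
  have horb : {y | π.SameCycle x y} = MulAction.orbit (Subgroup.zpowers π) x := by
    ext y
    simp only [SameCycle, Set.mem_ofPred_eq, MulAction.mem_orbit_iff, Subtype.exists,
      Subgroup.mem_zpowers_iff, exists_prop, exists_exists_eq_and, Subgroup.mk_smul, Perm.smul_def]
  rw [horb] at hfin ⊢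
  have := hfin.fintype
  rw [← Nat.card_coe_set_eq, Nat.card_eq_fintype_card, ← MulAction.minimalPeriod_eq_card]
  rfl

theorem exists_odd_pow_eq_one {π : Perm α} (hfin : {p | π p ≠ p}.Finite)
    (hodd : ∀ p, π p ≠ p → Odd {q | π.SameCycle p q}.ncard) : ∃ L, Odd L ∧ π ^ L = 1 := by
  have hper : ∀ p, π p ≠ p → Odd (Function.minimalPeriod π p) := fun p hp => by
    rw [← ncard_setOf_sameCycle (Set.finite_of_ncard_ne_zero (hodd p hp).pos.ne')]
    exact hodd p hp
  refine ⟨∏ p ∈ hfin.toFinset, Function.minimalPeriod π p,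
    Finset.prod_induction _ Odd (fun _ _ => Odd.mul) odd_one fun p hp => hper p (by simpa using hp),
    Equiv.ext fun p => ?_⟩
  by_cases hp : π p = p
  · exact pow_apply_eq_self_of_apply_eq_self hp _
  · rw [one_apply, ← iterate_eq_pow]
    exact (Function.isPeriodicPt_iff_minimalPeriod_dvd.mpr
      (Finset.dvd_prod_of_mem _ (by simpa using hp))).eq

theorem mem_fixingSubgroup_Ici_iff {σ : Perm ℕ} {n : ℕ} :
    σ ∈ fixingSubgroup (Perm ℕ) (Ici n) ↔ {p | σ p ≠ p} ⊆ Iio n := by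
  simp only [mem_fixingSubgroup_iff, Set.mem_Ici, Set.subset_def, Set.mem_Iio]
  exact forall_congr' fun p => by rw [← not_lt, not_imp_comm]; rfl

theorem swap_mem_closure_swap_succ {n a b : ℕ} (hab : a ≤ b) (hb : b < n) :
    swap a b ∈ Subgroup.closure {σ | ∃ i, i + 1 < n ∧ σ = swap i (i + 1)} := by
  induction b, hab using Nat.le_induction with
  | base => rw [swap_self, ← one_def]; exact one_mem _
  | succ b hab ih =>
    have hgen : swap b (b + 1) ∈ Subgroup.closure {σ | ∃ i, i + 1 < n ∧ σ = swap i (i + 1)} :=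
      Subgroup.subset_closure ⟨b, hb, rfl⟩
    rcases hab.eq_or_lt with rfl | hlt
    · exact hgen
    rw [swap_comm, ← swap_mul_swap_mul_swap hlt.ne (by omega)]
    exact mul_mem (mul_mem hgen (ih (by omega))) hgen

theorem closure_swap_succ (n : ℕ) :
    Subgroup.closure {σ | ∃ i, i + 1 < n ∧ σ = swap i (i + 1)} =
      fixingSubgroup (Perm ℕ) (Ici n) := by
  refine le_antisymm ((Subgroup.closure_le _).mpr ?_) ?_
  · rintro _ ⟨i, hi, rfl⟩
    refine mem_fixingSubgroup_Ici_iff.mpr fun p hp => ?_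
    by_contra h
    exact hp (swap_apply_of_ne_of_ne (by simp at h; omega) (by simp at h; omega))
  induction n with
  | zero =>
    intro σ hσ
    rw [show σ = 1 from Equiv.ext fun p =>
      not_not.mp fun h => Nat.not_lt_zero p (mem_fixingSubgroup_Ici_iff.mp hσ h)]
    exact one_mem _
  | succ n ih =>
    intro σ hσ
    have hfix {p} (hp : n + 1 ≤ p) : σ p = p := (mem_fixingSubgroup_iff _).mp hσ p hp
    have hσn : σ n ≤ n := by
      by_contra h
      exact h (σ.injective (hfix (by omega))).le
    have hrest : swap (σ n) n * σ ∈ fixingSubgroup (Perm ℕ) (Ici n) := by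
      refine (mem_fixingSubgroup_iff _).mpr fun p hp => ?_
      rcases (Set.mem_Ici.mp hp).eq_or_lt with rfl | hlt
      · simp
      · rw [Perm.smul_def, mul_apply, hfix hlt, swap_apply_of_ne_of_ne (by omega) (by omega)]
    rw [← swap_mul_self_mul (σ n) n σ]
    exact mul_mem (swap_mem_closure_swap_succ hσn (by omega))
      (Subgroup.closure_mono (by rintro _ ⟨i, hi, rfl⟩; exact ⟨i, by omega, rfl⟩) (ih hrest))

theorem finite_fixingSubgroup_Ici (n : ℕ) :
    (fixingSubgroup (Perm ℕ) (Ici n) : Set (Perm ℕ)).Finite := by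
  refine (Set.finite_range (ofSubtype : Perm {p // p < n} → Perm ℕ)).subset fun σ hσ => ?_
  have hmoved : ∀ p, σ p ≠ p → p < n := fun p hp => mem_fixingSubgroup_Ici_iff.mp hσ hp
  refine ⟨σ.subtypePerm fun p => ⟨fun hp => ?_, fun hp => ?_⟩, ofSubtype_subtypePerm _ hmoved⟩
  · by_contra h
    exact h (hmoved p fun he => h (he ▸ hp))
  · by_contra h
    refine h (hmoved _ fun he => ?_)
    rw [σ.injective he] at h
    exact h hp

theorem exists_mem_fixingSubgroup_Ici_eqOn {n : ℕ} {A : Set ℕ} {f : ℕ → ℕ} (hA : A ⊆ Iio n)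
    (hf : InjOn f A) (hfA : MapsTo f A (Iio n)) :
    ∃ σ ∈ fixingSubgroup (Perm ℕ) (Ici n), EqOn σ f A := by
  classical
  obtain ⟨g, hg⟩ := MapsTo.exists_equiv_extend_of_card_eq (α := Finset.range n)
    (t := Finset.range n) (s := {p | p.1 ∈ A}) (f := fun p => f p) (by simp)
    (fun p hp => by simpa using hfA hp) (fun p hp q hq h => Subtype.ext (hf hp hq h))
  refine ⟨ofSubtype g, mem_fixingSubgroup_Ici_iff.mpr fun p hp => ?_, fun p hp => ?_⟩
  · by_contra h
    exact hp (ofSubtype_apply_of_not_mem _ (by simpa using h))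
  · rw [ofSubtype_apply_of_mem _ (by simpa using hA hp)]
    exact hg ⟨p, _⟩ hp

theorem exists_mem_fixingSubgroup_Ici_image_eq {S T : Set ℕ} (hS : S.Finite) (hT : T.Finite)
    (h : S.ncard = T.ncard) : ∃ n : ℕ, ∃ σ ∈ fixingSubgroup (Perm ℕ) (Ici n), σ '' S = T := by
  obtain ⟨f, hf⟩ := hS.exists_bijOn_of_encard_eq (t := T)
    (by rw [← hS.cast_ncard_eq, ← hT.cast_ncard_eq, h])
  obtain ⟨n, hn⟩ := (hS.union hT : (S ∪ T).Finite).bddAbove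
  have hsub : S ∪ T ⊆ Iio (n + 1) := fun p hp => Nat.lt_succ_of_le (hn hp)
  obtain ⟨σ, hσ, hσf⟩ := exists_mem_fixingSubgroup_Ici_eqOn
    (subset_union_left.trans hsub) hf.injOn (hf.mapsTo.mono_right (subset_union_right.trans hsub))
  exact ⟨n + 1, σ, hσ, (hσf.image_eq).trans hf.image_eq⟩

end Equiv.Perm

section ConjOrbit

variable {G α ι : Type*} [Group G]

def conjOrbit (H : Subgroup G) (x : ι → G) : Set (ι → G) :=
  {y | ∃ w ∈ H, ∀ i, y i = w * x i * w⁻¹}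

theorem conj_mem_conjOrbit {H : Subgroup G} {x y : ι → G} (hy : y ∈ conjOrbit H x) {w : G}
    (hw : w ∈ H) : (fun i => w * y i * w⁻¹) ∈ conjOrbit H x := by
  obtain ⟨v, hv, hyv⟩ := hy
  exact ⟨w * v, mul_mem hw hv, fun i => by simp only [hyv]; group⟩

theorem conjOrbit_eq_of_mem {H : Subgroup G} {x y : ι → G} (hy : y ∈ conjOrbit H x) :
    conjOrbit H y = conjOrbit H x := by
  obtain ⟨v, hv, hyv⟩ := hy
  ext z
  constructor
  · rintro ⟨w, hw, hz⟩
    exact ⟨w * v, mul_mem hw hv, fun i => by rw [hz, hyv]; group⟩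
  · rintro ⟨w, hw, hz⟩
    exact ⟨w * v⁻¹, mul_mem hw (inv_mem hv), fun i => by rw [hz, hyv]; group⟩

def movedPoints (f : G →* Perm α) (y : ι → G) : Set α :=
  ⋃ i, {p | f (y i) p ≠ p}

theorem movedPoints_conj (f : G →* Perm α) (w : G) (y : ι → G) :
    movedPoints f (fun i => w * y i * w⁻¹) = f w '' movedPoints f y := by
  simp only [movedPoints, image_iUnion, Perm.image_setOf_apply_ne, map_mul, map_inv]

theorem ncard_movedPoints_of_mem_conjOrbit (f : G →* Perm α) {H : Subgroup G} {x y : ι → G}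
    (hy : y ∈ conjOrbit H x) : (movedPoints f y).ncard = (movedPoints f x).ncard := by
  obtain ⟨w, -, hyw⟩ := hy
  rw [funext hyw, movedPoints_conj, ncard_image_of_injective _ (f w).injective]

end ConjOrbit

theorem zi_mul_zi : zi * zi = 1 := by
  rw [← sq]
  exact (map_pow (PresentedGroup.mk spinRelInf) ZfI 2).symm.trans
    (PresentedGroup.one_of_mem (Or.inl rfl))

theorem zi_mem_center : zi ∈ Subgroup.center SpinCoverInf := by
  refine Subgroup.mem_center_iff.mpr fun g => Subgroup.mem_centralizer_singleton_iff.mp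
    (PresentedGroup.generated_by _ (Subgroup.centralizer {zi}) (fun j => ?_) g)
  rw [Subgroup.mem_centralizer_singleton_iff]
  rcases j with i | ⟨⟩
  · have h : PresentedGroup.mk spinRelInf (ZfI * TfI i * ZfI⁻¹ * (TfI i)⁻¹) = 1 :=
      PresentedGroup.one_of_mem (Or.inr (Or.inl ⟨i, rfl⟩))
    simp only [map_mul, map_inv, mul_inv_eq_iff_eq_mul, one_mul] at h
    exact h.symm
  · rfl

theorem exists_mem_spinSub (g : SpinCoverInf) : ∃ n, g ∈ SpinSub n := by
  have hmono : Monotone SpinSub := fun m n hmn =>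
    Subgroup.closure_mono (union_subset_union_right _ fun _ ⟨i, hi, h⟩ => ⟨i, by omega, h⟩)
  refine (Subgroup.mem_iSup_of_directed hmono.directed_le).mp
    (PresentedGroup.generated_by _ _ (fun j => ?_) g)
  refine Subgroup.mem_iSup_of_mem (j.elim (· + 2) fun _ => 0) (Subgroup.subset_closure ?_)
  rcases j with i | ⟨⟩
  exacts [Or.inr ⟨i, by simp, rfl⟩, Or.inl rfl]

structure IsSpinCover (θ : SpinCoverInf →* Perm ℕ) : Prop where
  map_tgi : ∀ i : ℕ, θ (tgi i) = swap i (i + 1)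
  map_eq_one_iff : ∀ x, θ x = 1 ↔ x = 1 ∨ x = zi

namespace IsSpinCover

variable {θ : SpinCoverInf →* Perm ℕ} {ι : Type*}

theorem ker_le_center (hθ : IsSpinCover θ) : θ.ker ≤ Subgroup.center SpinCoverInf :=
  fun c hc => by
    rcases (hθ.map_eq_one_iff c).mp hc with rfl | rfl
    exacts [one_mem _, zi_mem_center]

theorem mul_self_eq_one_of_mem_ker (hθ : IsSpinCover θ) : ∀ c ∈ θ.ker, c * c = 1 :=
  fun c hc => by
    rcases (hθ.map_eq_one_iff c).mp hc with rfl | rfl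
    exacts [mul_one 1, zi_mul_zi]

theorem map_spinSub (hθ : IsSpinCover θ) (n : ℕ) :
    (SpinSub n).map θ = fixingSubgroup (Perm ℕ) (Ici n) := by
  rw [SpinSub, MonoidHom.map_closure, image_union, image_singleton,
    (hθ.map_eq_one_iff zi).mpr (Or.inr rfl), ← Set.insert_eq, Subgroup.closure_insert_one,
    ← Perm.closure_swap_succ]
  congr 1
  ext σ
  simp only [mem_image, mem_ofPred_eq]
  constructor
  · rintro ⟨_, ⟨i, hi, rfl⟩, rfl⟩
    exact ⟨i, hi, hθ.map_tgi i⟩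
  · rintro ⟨i, hi, rfl⟩
    exact ⟨tgi i, ⟨i, hi, rfl⟩, hθ.map_tgi i⟩

theorem exists_mem_spinSub_apply_eq (hθ : IsSpinCover θ) {n : ℕ} {σ : Perm ℕ}
    (hσ : σ ∈ fixingSubgroup (Perm ℕ) (Ici n)) : ∃ w ∈ SpinSub n, θ w = σ :=
  Subgroup.mem_map.mp (hθ.map_spinSub n ▸ hσ)

theorem spinSub_eq_comap (hθ : IsSpinCover θ) (n : ℕ) :
    SpinSub n = (fixingSubgroup (Perm ℕ) (Ici n)).comap θ := by
  rw [← hθ.map_spinSub, Subgroup.comap_map_eq, left_eq_sup]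
  intro c hc
  rcases (hθ.map_eq_one_iff c).mp hc with rfl | rfl
  exacts [one_mem _, Subgroup.subset_closure (Or.inl rfl)]

theorem finite_setOf_apply_ne (hθ : IsSpinCover θ) (g : SpinCoverInf) :
    {p | θ g p ≠ p}.Finite := by
  obtain ⟨n, hn⟩ := exists_mem_spinSub g
  rw [hθ.spinSub_eq_comap, Subgroup.mem_comap, Perm.mem_fixingSubgroup_Ici_iff] at hn
  exact (finite_Iio n).subset hn

theorem finite_spinSub (hθ : IsSpinCover θ) (n : ℕ) : (SpinSub n : Set SpinCoverInf).Finite := by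
  rw [hθ.spinSub_eq_comap, Subgroup.coe_comap]
  refine (Perm.finite_fixingSubgroup_Ici n).preimage' fun σ _ => ?_
  rcases isEmpty_or_nonempty (θ ⁻¹' {σ}) with h | ⟨w, hw⟩
  · exact (Set.isEmpty_coe_sort.mp h) ▸ finite_empty
  refine (toFinite {w, w * zi}).subset fun v hv => ?_
  have hv1 : θ (w⁻¹ * v) = 1 := by
    rw [map_mul, map_inv, show θ w = σ from hw, show θ v = σ from hv, inv_mul_cancel]
  rcases (hθ.map_eq_one_iff _).mp hv1 with h | h
  · exact Or.inl (inv_mul_eq_one.mp h).symm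
  · exact Or.inr (eq_mul_of_inv_mul_eq h ▸ rfl)

theorem forall_mem_spinSub_iff (hθ : IsSpinCover θ) {n : ℕ} {y : ι → SpinCoverInf} :
    (∀ i, y i ∈ SpinSub n) ↔ movedPoints θ y ⊆ Iio n := by
  simp only [hθ.spinSub_eq_comap, Subgroup.mem_comap, Perm.mem_fixingSubgroup_Ici_iff,
    movedPoints, iUnion_subset_iff]

theorem ncard_movedPoints_le (hθ : IsSpinCover θ) {n : ℕ} {y : ι → SpinCoverInf}
    (hy : ∀ i, y i ∈ SpinSub n) : (movedPoints θ y).ncard ≤ n :=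
  (ncard_le_ncard (hθ.forall_mem_spinSub_iff.mp hy) (finite_Iio n)).trans_eq (ncard_Iio_nat n)

theorem finite_setOf_movedPoints_subset (hθ : IsSpinCover θ) [Finite ι] (n : ℕ) :
    {y : ι → SpinCoverInf | movedPoints θ y ⊆ Iio n}.Finite := by
  simp_rw [← hθ.forall_mem_spinSub_iff]
  simpa [Set.pi] using Set.Finite.pi (t := fun _ : ι => (SpinSub n : Set SpinCoverInf))
    fun _ => hθ.finite_spinSub n

theorem exists_mem_conjOrbit_movedPoints_eq (hθ : IsSpinCover θ) [Finite ι]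
    (x : ι → SpinCoverInf) :
    ∃ y ∈ conjOrbit ⊤ x, movedPoints θ y = Iio (movedPoints θ x).ncard := by
  obtain ⟨n, σ, hσ, hσx⟩ := Perm.exists_mem_fixingSubgroup_Ici_image_eq
    (finite_iUnion fun i => hθ.finite_setOf_apply_ne (x i)) (finite_Iio _) (ncard_Iio_nat _).symm
  obtain ⟨w, -, rfl⟩ := hθ.exists_mem_spinSub_apply_eq hσ
  exact ⟨_, ⟨w, Subgroup.mem_top w, fun i => rfl⟩, (movedPoints_conj θ w x).trans hσx⟩

theorem exists_odd_pow_eq_one (hθ : IsSpinCover θ) {a : SpinCoverInf} (ha : EvenSplit θ a) :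
    ∃ L, Odd L ∧ θ a ^ L = 1 :=
  Perm.exists_odd_pow_eq_one (hθ.finite_setOf_apply_ne a) ha

theorem exists_mem_spinSub_conj_eq (hθ : IsSpinCover θ) {n : ℕ} {y : ι → SpinCoverInf}
    (hodd : ∀ i, ∃ L, Odd L ∧ θ (y i) ^ L = 1) (hy : movedPoints θ y ⊆ Iio n) (u : SpinCoverInf)
    (hu : movedPoints θ (fun i => u * y i * u⁻¹) ⊆ Iio n) :
    ∃ w ∈ SpinSub n, ∀ i, w * y i * w⁻¹ = u * y i * u⁻¹ := by
  rw [movedPoints_conj] at hu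
  obtain ⟨σ, hσ, hσu⟩ := Perm.exists_mem_fixingSubgroup_Ici_eqOn hy (θ u).injective.injOn
    fun p hp => hu (mem_image_of_mem _ hp)
  obtain ⟨w, hw, rfl⟩ := hθ.exists_mem_spinSub_apply_eq hσ
  refine ⟨w, hw, fun i => ?_⟩
  have hfix : ∀ p ∈ movedPoints θ y, θ (w⁻¹ * u) p = p := fun p hp => by
    rw [map_mul, map_inv, Perm.mul_apply, ← hσu hp, Perm.inv_eq_iff_eq]
  obtain ⟨L, hL, hyL⟩ := hodd i
  have hcomm := commute_of_commute_map_of_odd θ hθ.ker_le_center hθ.mul_self_eq_one_of_mem_ker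
    hL hyL
    (Perm.commute_of_setOf_apply_ne_subset (subset_iUnion (fun i => {p | θ (y i) p ≠ p}) i) hfix)
  calc w * y i * w⁻¹ = w * ((w⁻¹ * u) * y i * (w⁻¹ * u)⁻¹) * w⁻¹ := by
        rw [hcomm.eq, mul_inv_cancel_right]
    _ = u * y i * u⁻¹ := by group

theorem conjOrbit_inter_spinSub (hθ : IsSpinCover θ) {n : ℕ} {x y : ι → SpinCoverInf}
    (hx : ∀ i, EvenSplit θ (x i)) (hy : y ∈ conjOrbit ⊤ x) (hyn : movedPoints θ y ⊆ Iio n) :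
    {z ∈ conjOrbit ⊤ x | ∀ i, z i ∈ SpinSub n} = conjOrbit (SpinSub n) y := by
  have hodd (i) : ∃ L, Odd L ∧ θ (y i) ^ L = 1 := by
    obtain ⟨w, -, hyw⟩ := hy
    obtain ⟨L, hL, hxL⟩ := hθ.exists_odd_pow_eq_one (hx i)
    exact ⟨L, hL, by rw [hyw, map_mul, map_mul, map_inv, conj_pow, hxL, mul_one, mul_inv_cancel]⟩
  rw [← conjOrbit_eq_of_mem hy]
  ext z
  constructor
  · rintro ⟨⟨u, -, hz⟩, hzn⟩
    rw [funext hz, hθ.forall_mem_spinSub_iff] at hzn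
    obtain ⟨w, hw, hwu⟩ := hθ.exists_mem_spinSub_conj_eq hodd hyn u hzn
    exact ⟨w, hw, fun i => (hz i).trans (hwu i).symm⟩
  · rintro ⟨w, hw, hz⟩
    refine ⟨⟨w, Subgroup.mem_top w, hz⟩, fun i => hz i ▸ ?_⟩
    exact mul_mem (mul_mem hw (hθ.forall_mem_spinSub_iff.mpr hyn i)) (inv_mem hw)

theorem ncard_setOf_movedPoints_eq (hθ : IsSpinCover θ) (x : ι → SpinCoverInf) {S T : Set ℕ}
    (hS : S.Finite) (hT : T.Finite) (hST : S.ncard = T.ncard) :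
    {y ∈ conjOrbit ⊤ x | movedPoints θ y = S}.ncard =
      {y ∈ conjOrbit ⊤ x | movedPoints θ y = T}.ncard := by
  obtain ⟨n, σ, hσ, hσS⟩ := Perm.exists_mem_fixingSubgroup_Ici_image_eq hS hT hST
  obtain ⟨w, -, rfl⟩ := hθ.exists_mem_spinSub_apply_eq hσ
  have hconj : Function.Injective fun (y : ι → SpinCoverInf) i => w * y i * w⁻¹ :=
    fun y y' h => funext fun i => (MulAut.conj w).injective (congrFun h i)
  rw [← Set.ncard_image_of_injective _ hconj]
  congr 1
  ext y
  constructor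
  · rintro ⟨y', ⟨hy'x, hy'S⟩, rfl⟩
    exact ⟨conj_mem_conjOrbit hy'x (Subgroup.mem_top w), by rw [movedPoints_conj, hy'S, hσS]⟩
  · rintro ⟨hyx, hyT⟩
    refine ⟨fun i => w⁻¹ * y i * w⁻¹⁻¹, ⟨conj_mem_conjOrbit hyx (Subgroup.mem_top _), ?_⟩,
      funext fun i => by group⟩
    rw [movedPoints_conj, hyT, ← hσS, map_inv, Perm.inv_def, symm_image_image]

theorem ncard_conjOrbit_inter_spinSub (hθ : IsSpinCover θ) [Finite ι] (x : ι → SpinCoverInf)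
    (n : ℕ) :
    {y ∈ conjOrbit ⊤ x | ∀ i, y i ∈ SpinSub n}.ncard = n.choose (movedPoints θ x).ncard *
      {y ∈ conjOrbit ⊤ x | movedPoints θ y = Iio (movedPoints θ x).ncard}.ncard := by
  refine ncard_eq_choose_mul_of_ncard_fiber ((hθ.finite_setOf_movedPoints_subset n).subset
    fun y hy => hθ.forall_mem_spinSub_iff.mp hy.2) (movedPoints θ)
    (fun y hy => ⟨hθ.forall_mem_spinSub_iff.mp hy.2, ncard_movedPoints_of_mem_conjOrbit θ hy.1⟩)
    fun T hTn hTN => ?_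
  rw [← hθ.ncard_setOf_movedPoints_eq x T.finite_toSet (finite_Iio _)
    (by rw [ncard_coe_finset, hTN, ncard_Iio_nat])]
  congr 1
  ext y
  simp only [mem_ofPred_eq, hθ.forall_mem_spinSub_iff, and_assoc]
  exact and_congr_right fun _ =>
    and_iff_right_of_imp fun hy => hy ▸ fun p hp => by simpa using hTn hp

end IsSpinCover

theorem tuple_class_intersection_general (θ : SpinCoverInf →* Equiv.Perm ℕ)
    (hθ : ∀ i : ℕ, θ (tgi i) = Equiv.swap i (i + 1))
    (hker : ∀ x, θ x = 1 ↔ x = 1 ∨ x = zi)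
    (r : ℕ) (C : Set (Fin r → SpinCoverInf))
    (x₀ : Fin r → SpinCoverInf) (hx₀ : ∀ i, EvenSplit θ (x₀ i))
    (hC : C = {y | ∃ w : SpinCoverInf, ∀ i, y i = w * x₀ i * w⁻¹})
    (N : ℕ) (hN : N = Set.ncard (⋃ i : Fin r, {p : ℕ | θ (x₀ i) p ≠ p})) :
    (∀ n : ℕ, n < N → {y ∈ C | ∀ i, y i ∈ SpinSub n} = ∅) ∧
    (∀ n : ℕ, N ≤ n → ∃ y₀ : Fin r → SpinCoverInf,
      y₀ ∈ C ∧ (∀ i, y₀ i ∈ SpinSub n) ∧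
      {y ∈ C | ∀ i, y i ∈ SpinSub n} =
        {y | ∃ w ∈ SpinSub n, ∀ i, y i = w * y₀ i * w⁻¹}) ∧
    (∃ k : ℚ, 0 < k ∧ ∀ n : ℕ, N ≤ n →
      (Set.ncard {y ∈ C | ∀ i, y i ∈ SpinSub n} : ℚ) =
        (Nat.descFactorial n N : ℚ) / k) := by
  have hcover : IsSpinCover θ := ⟨hθ, hker⟩
  obtain rfl : C = conjOrbit ⊤ x₀ := by simp [hC, conjOrbit]
  replace hN : (movedPoints θ x₀).ncard = N := hN.symm
  obtain ⟨y₀, hy₀x, hy₀⟩ := hcover.exists_mem_conjOrbit_movedPoints_eq x₀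
  rw [hN] at hy₀
  have hy₀n {n} (hn : N ≤ n) : movedPoints θ y₀ ⊆ Iio n := hy₀ ▸ Iio_subset_Iio hn
  refine ⟨fun n hn => ?_, fun n hn => ⟨y₀, hy₀x, hcover.forall_mem_spinSub_iff.mpr (hy₀n hn),
    hcover.conjOrbit_inter_spinSub hx₀ hy₀x (hy₀n hn)⟩, ?_⟩
  · refine eq_empty_of_forall_notMem fun y ⟨hyx, hy⟩ => ?_
    have := hcover.ncard_movedPoints_le hy
    rw [ncard_movedPoints_of_mem_conjOrbit θ hyx, hN] at this
    omega
  · have hK : 0 < {y ∈ conjOrbit ⊤ x₀ | movedPoints θ y = Iio N}.ncard :=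
      (ncard_pos ((hcover.finite_setOf_movedPoints_subset _).subset fun _ hy => hy.2.subset)).mpr
        ⟨y₀, hy₀x, hy₀⟩
    refine ⟨N.factorial / {y ∈ conjOrbit ⊤ x₀ | movedPoints θ y = Iio N}.ncard, by positivity,
      fun n _ => ?_⟩
    rw [hcover.ncard_conjOrbit_inter_spinSub, hN, Nat.descFactorial_eq_factorial_mul_choose]
    push_cast
    field_simp

/-- Let `𝒞` be an orbit of the simultaneous conjugation action of `S̃_∞` on `r`-tuples
of even split elements, and let `N` be the number of points moved by a tuple in `𝒞`.
Then (i) `𝒞 ∩ (S̃_n)^r = ∅` for `n < N`; (ii) for `n ≥ N` it is a single orbit of the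
simultaneous conjugation action of `S̃_n`; and (iii) there is a constant `k(𝒞) > 0`,
independent of `n`, with `|𝒞 ∩ (S̃_n)^r| = n(n-1)⋯(n-N+1)/k(𝒞)` for all `n ≥ N`. -/
theorem tuple_class_intersection (θ : SpinCoverInf →* Equiv.Perm ℕ)
    (hθ : ∀ i : ℕ, θ (tgi i) = Equiv.swap i (i + 1))
    (hker : ∀ x, θ x = 1 ↔ x = 1 ∨ x = zi)
    (r : ℕ) (hr : 1 ≤ r) (C : Set (Fin r → SpinCoverInf))
    (x₀ : Fin r → SpinCoverInf) (hx₀ : ∀ i, EvenSplit θ (x₀ i))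
    (hC : C = {y | ∃ w : SpinCoverInf, ∀ i, y i = w * x₀ i * w⁻¹})
    (N : ℕ) (hN : N = Set.ncard (⋃ i : Fin r, {p : ℕ | θ (x₀ i) p ≠ p})) :
    (∀ n : ℕ, n < N → {y ∈ C | ∀ i, y i ∈ SpinSub n} = ∅) ∧
    (∀ n : ℕ, N ≤ n → ∃ y₀ : Fin r → SpinCoverInf,
      y₀ ∈ C ∧ (∀ i, y₀ i ∈ SpinSub n) ∧
      {y ∈ C | ∀ i, y i ∈ SpinSub n} =
        {y | ∃ w ∈ SpinSub n, ∀ i, y i = w * y₀ i * w⁻¹}) ∧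
    (∃ k : ℚ, 0 < k ∧ ∀ n : ℕ, N ≤ n →
      (Set.ncard {y ∈ C | ∀ i, y i ∈ SpinSub n} : ℚ) =
        (Nat.descFactorial n N : ℚ) / k) :=
  tuple_class_intersection_general θ hθ hker r C x₀ hx₀ hC N hN
end

section
/- For every integer r ≥ 1, the following identity holds in ℚ: Σ_μ (−1)^{ℓ(μ)} · ( (2r)(2r+1)⋯(2r+ℓ(μ)−1) / ∏_{i≥1} m_i(μ)! ) · ∏_{j=1}^{ℓ(μ)} catalan(μ_j) = 2·(−1)^r, where the sum is over all partitions μ = (μ_1, …, μ_{ℓ(μ)}) of r. -/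
/-!
Group the partitions of `r` by their length `ℓ`. The weight `ℓ! / ∏ᵢ mᵢ(μ)!` counts the
compositions obtained by ordering the parts of `μ`, so the partitions of length `ℓ` contribute
`[xʳ] (C - 1)^ℓ`, where `C = Σ catalan n xⁿ`. The coefficient `(-1)^ℓ (2r)(2r+1)⋯(2r+ℓ-1) / ℓ!` is
`binom(-2r, ℓ)`, so the whole sum is `[xʳ] (1 + (C - 1))^(-2r) = [xʳ] C^(-2r)`.

From `C = 1 + x C²` we get `C⁻¹ = u := 1 - x C`, and with `v := x C` we have `u + v = 1`,
`u v = x`. Hence `pₙ := uⁿ + vⁿ` satisfies `pₙ₊₂ = pₙ₊₁ - x pₙ`, `p₀ = 2`, `p₁ = 1`, so `[xᵏ] pₙ = 0`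
for `n < 2k` and `[xʳ] p₂ᵣ = 2 (-1)^r`. Since `v²ʳ` is divisible by `x²ʳ`, `[xʳ] u²ʳ = 2 (-1)^r`
as soon as `r ≥ 1`.
-/

open PowerSeries Finset

theorem Ring.choose_neg_natCast_mul_factorial (n k : ℕ) :
    Ring.choose (-(n : ℤ)) k * k.factorial = (-1) ^ k * n.ascFactorial k := by
  have hmulti : Ring.multichoose (n : ℤ) k = ((n + k - 1).choose k : ℤ) := rfl
  rw [Ring.choose_neg', hmulti, Nat.ascFactorial_eq_factorial_mul_choose', Units.smul_def,
    Int.coe_negOnePow_natCast, smul_eq_mul]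
  push_cast
  ring

theorem Multiset.prod_factorial_count_mul_countPerms {α : Type*} [DecidableEq α]
    (m : Multiset α) :
    (∏ i ∈ m.toFinset, (m.count i).factorial) * m.countPerms = (card m).factorial := by
  have hm : ⇑m.toFinsupp = fun i => m.count i := funext m.toFinsupp_apply
  rw [countPerms, Finsupp.multinomial_eq, toFinsupp_support, hm, Nat.multinomial_spec,
    toFinset_sum_count_eq]

theorem Multiset.neg_one_pow_card_mul_ascFactorial_div_prod_factorial_count {K α : Type*}
    [Field K] [CharZero K] [DecidableEq α] (n : ℕ) (m : Multiset α) :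
    (-1 : K) ^ card m * ((n.ascFactorial (card m) : K) /
      ∏ i ∈ m.toFinset, ((m.count i).factorial : K)) =
      ((Ring.choose (-(n : ℤ)) (card m) : ℤ) : K) * m.countPerms := by
  have hperm := congrArg (Nat.cast (R := K)) m.prod_factorial_count_mul_countPerms
  have hchoose := congrArg (Int.cast (R := K)) (Ring.choose_neg_natCast_mul_factorial n (card m))
  push_cast at hperm hchoose
  have hprod : ∏ i ∈ m.toFinset, ((m.count i).factorial : K) ≠ 0 :=
    prod_ne_zero_iff.2 fun i _ => Nat.cast_ne_zero.2 (Nat.factorial_ne_zero _)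
  field_simp
  linear_combination -hchoose - ((Ring.choose (-(n : ℤ)) (card m) : ℤ) : K) * hperm

theorem Polynomial.multiset_prod_map_monomial {R : Type*} [CommSemiring R] (a : ℕ → R)
    (k : Multiset ℕ) :
    (k.map fun j => monomial j (a j)).prod = monomial k.sum (k.map a).prod := by
  induction k using Multiset.induction_on with
  | empty => simp
  | cons j k ih => simp [ih, monomial_mul_monomial]

namespace Nat.Partition

theorem sum_sym_eq_sum_card_eq {M : Type*} [AddCommMonoid M] (g : Multiset ℕ → M) (n ℓ : ℕ) :
    ∑ k ∈ (Icc 1 n).sym ℓ with (Sym.toMultiset k).sum = n, g k =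
      ∑ μ : n.Partition with Multiset.card μ.parts = ℓ, g μ.parts := by
  refine sum_bij' (fun k hk => ⟨k, fun hi => ?_, (mem_filter.1 hk).2⟩)
    (fun μ hμ => Sym.mk μ.parts (mem_filter.1 hμ).2) (fun k _ => by simp) (fun μ _ => ?_)
    (fun _ _ => rfl) (fun _ _ => rfl) (fun _ _ => rfl)
  · exact (mem_Icc.1 (mem_sym_iff.1 (mem_filter.1 hk).1 _ hi)).1
  · simp only [mem_filter, mem_sym_iff, mem_Icc]
    exact ⟨fun i hi => ⟨μ.parts_pos hi, le_of_mem_parts hi⟩, μ.parts_sum⟩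

theorem sum_mul_eq_sum_range_mul_sum_card_eq {R : Type*} [NonUnitalNonAssocSemiring R] (n : ℕ)
    (g : ℕ → R) (w : n.Partition → R) :
    ∑ μ, g (Multiset.card μ.parts) * w μ =
      ∑ ℓ ∈ range (n + 1), g ℓ * ∑ μ : n.Partition with Multiset.card μ.parts = ℓ, w μ := by
  rw [← sum_fiberwise_of_maps_to (t := range (n + 1)) fun μ _ => mem_range.2 (Nat.lt_succ_of_le ?_)]
  · refine sum_congr rfl fun ℓ _ => ?_
    rw [mul_sum]
    exact sum_congr rfl fun μ hμ => by rw [(mem_filter.1 hμ).2]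
  · simpa [← μ.parts_sum] using Multiset.card_nsmul_le_sum fun _ h => μ.parts_pos h

end Nat.Partition

namespace PowerSeries

theorem coeff_pow_eq_sum_partitions {R : Type*} [CommSemiring R] {f : R⟦X⟧}
    (hf : constantCoeff f = 0) (n ℓ : ℕ) :
    coeff n (f ^ ℓ) = ∑ μ : n.Partition with Multiset.card μ.parts = ℓ,
      (μ.parts.countPerms : R) * (μ.parts.map fun j => coeff j f).prod := by
  have htrunc : trunc (n + 1) f = ∑ j ∈ Icc 1 n, Polynomial.monomial j (coeff j f) := by
    rw [trunc_apply]
    refine (sum_subset (fun j hj => ?_) fun j hj hj' => ?_).symm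
    · simp only [mem_Icc, mem_Ico] at hj ⊢; omega
    · obtain rfl : j = 0 := by simp only [mem_Icc, mem_Ico] at hj hj'; omega
      simp [hf]
  have hcoeff : coeff n (f ^ ℓ) = ((trunc (n + 1) f) ^ ℓ).coeff n := by
    calc coeff n (f ^ ℓ) = (trunc (n + 1) (f ^ ℓ)).coeff n := by simp [coeff_trunc]
      _ = _ := by
        rw [← trunc_trunc_pow, coeff_trunc, if_pos n.lt_succ_self, ← Polynomial.coe_pow,
          Polynomial.coeff_coe]
  rw [hcoeff, htrunc, sum_pow, Polynomial.finsetSum_coeff, ← Nat.Partition.sum_sym_eq_sum_card_eq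
    (fun s => (s.countPerms : R) * (s.map fun j => coeff j f).prod), sum_filter]
  refine sum_congr rfl fun k _ => ?_
  rw [Polynomial.multiset_prod_map_monomial, ← Polynomial.C_eq_natCast, Polynomial.coeff_C_mul,
    Polynomial.coeff_monomial]
  split_ifs <;> simp_all

theorem coeff_subst_eq_sum_range {A : Type*} [CommRing A] {f : A⟦X⟧}
    (hf : constantCoeff f = 0) (g : A⟦X⟧) (n : ℕ) :
    coeff n (g.subst f) = ∑ d ∈ range (n + 1), coeff d g * coeff n (f ^ d) := by
  rw [coeff_subst' (HasSubst.of_constantCoeff_zero' hf)]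
  refine finsum_eq_sum_of_support_subset _ fun d hd => ?_
  obtain ⟨h, rfl⟩ := X_dvd_iff.2 hf
  by_contra hdn
  simp only [coe_range, Set.mem_Iio, not_lt] at hdn
  simp [mul_pow, coeff_X_pow_mul', show ¬ d ≤ n by omega] at hd

theorem subst_binomialSeries_neg_mul_one_add_pow {A : Type*} [CommRing A] {f : A⟦X⟧}
    (hf : constantCoeff f = 0) (d : ℕ) :
    (binomialSeries A (-d : ℤ)).subst f * (1 + f) ^ d = 1 := by
  have ha := HasSubst.of_constantCoeff_zero' hf
  have h1 : (1 : A⟦X⟧).subst f = 1 := by rw [← coe_substAlgHom ha, map_one]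
  calc _ = (binomialSeries A (-d : ℤ) * binomialSeries A (d : ℤ)).subst f := by
        rw [binomialSeries_nat, subst_mul ha, subst_pow ha, subst_add ha, subst_X ha, h1]
    _ = 1 := by rw [← binomialSeries_add, neg_add_cancel, binomialSeries_zero, h1]

section LucasSequence

variable {R : Type*} [CommRing R] {u v : R⟦X⟧}

theorem pow_add_pow_add_two (hsum : u + v = 1) (hprod : u * v = X) (n : ℕ) :
    u ^ (n + 2) + v ^ (n + 2) = (u ^ (n + 1) + v ^ (n + 1)) - X * (u ^ n + v ^ n) := by
  linear_combination (u ^ (n + 1) + v ^ (n + 1)) * hsum - (u ^ n + v ^ n) * hprod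

theorem coeff_pow_add_pow_of_lt (hsum : u + v = 1) (hprod : u * v = X) {n k : ℕ}
    (h : n < 2 * k) : coeff k (u ^ n + v ^ n) = 0 := by
  induction n using Nat.twoStepInduction generalizing k with
  | zero => rw [pow_zero, pow_zero, map_add, coeff_one, if_neg (by omega), add_zero]
  | one => simp [hsum, coeff_one, show k ≠ 0 by omega]
  | more n ih₀ ih₁ =>
    obtain ⟨k, rfl⟩ : ∃ k', k = k' + 1 := ⟨k - 1, by omega⟩
    rw [pow_add_pow_add_two hsum hprod, map_sub, coeff_succ_X_mul, ih₀ (by omega),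
      ih₁ (by omega), sub_zero]

theorem coeff_pow_add_pow_two_mul (hsum : u + v = 1) (hprod : u * v = X) (m : ℕ) :
    coeff m (u ^ (2 * m) + v ^ (2 * m)) = 2 * (-1) ^ m := by
  induction m with
  | zero => simp only [pow_zero, map_add]; norm_num
  | succ m ih =>
    rw [show 2 * (m + 1) = 2 * m + 2 by ring, pow_add_pow_add_two hsum hprod, map_sub,
      coeff_succ_X_mul, ih, coeff_pow_add_pow_of_lt hsum hprod (by omega)]
    ring

theorem coeff_pow_two_mul_of_add_eq_one (hsum : u + v = 1) (hprod : u * v = X)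
    (hv : constantCoeff v = 0) {m : ℕ} (hm : m ≠ 0) :
    coeff m (u ^ (2 * m)) = 2 * (-1) ^ m := by
  obtain ⟨w, rfl⟩ := X_dvd_iff.2 hv
  have hvm : coeff m ((X * w) ^ (2 * m)) = 0 := by
    rw [mul_pow, coeff_X_pow_mul', if_neg (by omega)]
  rw [← coeff_pow_add_pow_two_mul hsum hprod m, map_add, hvm, add_zero]

end LucasSequence

theorem constantCoeff_map_catalanSeries_sub_one (A : Type*) [CommRing A] :
    constantCoeff (catalanSeries.map (Nat.castRingHom A) - 1) = 0 := by
  rw [map_sub, ← coeff_zero_eq_constantCoeff_apply, coeff_map]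
  simp

theorem coeff_subst_catalanSeries_sub_one {A : Type*} [CommRing A] {r : ℕ} (hr : r ≠ 0) :
    coeff r ((binomialSeries A (-(2 * r : ℕ) : ℤ)).subst
      (catalanSeries.map (Nat.castRingHom A) - 1)) = 2 * (-1) ^ r := by
  set C := catalanSeries.map (Nat.castRingHom A)
  have hC : C ^ 2 * X + 1 = C := by
    simpa using congrArg (map (Nat.castRingHom A)) catalanSeries_sq_mul_X_add_one
  have hinv : (binomialSeries A (-(2 * r : ℕ) : ℤ)).subst (C - 1) = (1 - X * C) ^ (2 * r) := by
    have hx := subst_binomialSeries_neg_mul_one_add_pow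
      (constantCoeff_map_catalanSeries_sub_one A) (2 * r)
    have hDC : C ^ (2 * r) * (1 - X * C) ^ (2 * r) = 1 := by
      rw [← mul_pow, show C * (1 - X * C) = 1 by linear_combination -hC, one_pow]
    rw [add_sub_cancel] at hx
    exact left_inv_eq_right_inv hx hDC
  rw [hinv]
  exact coeff_pow_two_mul_of_add_eq_one (v := X * C) (by ring)
    (by linear_combination -X * hC) (by simp) hr

end PowerSeries

/-- The identity `Σ_{λ ∈ EP(2r)} A_λ P_λ(-2r) = 2(-1)^r` rewritten via `λ = 2μ` with
`μ` ranging over the partitions of `r`: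
`Σ_μ (-1)^{ℓ(μ)} · ((2r)(2r+1)⋯(2r+ℓ(μ)-1) / ∏_i m_i(μ)!) · ∏_j catalan(μ_j) = 2·(-1)^r`. -/
theorem catalan_partition_identity (r : ℕ) (hr : 1 ≤ r) :
    ∑ μ : Nat.Partition r,
      (-1 : ℚ) ^ (Multiset.card μ.parts) *
        ((Nat.ascFactorial (2 * r) (Multiset.card μ.parts) : ℚ) /
          ∏ i ∈ μ.parts.toFinset, (Nat.factorial (μ.parts.count i) : ℚ)) *
        (μ.parts.map (fun p => (catalan p : ℚ))).prod
      = 2 * (-1) ^ r := by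
  set E : ℚ⟦X⟧ := catalanSeries.map (Nat.castRingHom ℚ) - 1
  have hE : constantCoeff E = 0 := constantCoeff_map_catalanSeries_sub_one ℚ
  have hcat (μ : r.Partition) :
      (μ.parts.map fun j => coeff j E) = μ.parts.map fun p => (catalan p : ℚ) :=
    Multiset.map_congr rfl fun j hj => by simp [E, (μ.parts_pos hj).ne']
  calc _ = ∑ μ : r.Partition, ((Ring.choose (-(2 * r : ℕ) : ℤ) (Multiset.card μ.parts) : ℤ) : ℚ) *
        ((μ.parts.countPerms : ℚ) * (μ.parts.map fun j => coeff j E).prod) :=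
        sum_congr rfl fun μ _ => by
          rw [Multiset.neg_one_pow_card_mul_ascFactorial_div_prod_factorial_count, hcat, mul_assoc]
    _ = ∑ ℓ ∈ range (r + 1), ((Ring.choose (-(2 * r : ℕ) : ℤ) ℓ : ℤ) : ℚ) * coeff r (E ^ ℓ) := by
      rw [Nat.Partition.sum_mul_eq_sum_range_mul_sum_card_eq r
        fun ℓ => ((Ring.choose (-(2 * r : ℕ) : ℤ) ℓ : ℤ) : ℚ)]
      simp_rw [coeff_pow_eq_sum_partitions hE]
    _ = coeff r ((binomialSeries ℚ (-(2 * r : ℕ) : ℤ)).subst E) := by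
      rw [coeff_subst_eq_sum_range hE]
      simp [binomialSeries_coeff]
    _ = 2 * (-1) ^ r := coeff_subst_catalanSeries_sub_one (by omega)
end

section
/- For every integer r ≥ 1, the coefficient of x^r in the formal power series (1 − C)^{2r} ∈ ℤ[[x]] equals 2·(−1)^r. -/
/-!
`C` and `1 - C` are the two roots of `t² - t + x`, since the Catalan recursion says
`C² = C - x`. Hence the power sums `pₙ = (1 - C)ⁿ + Cⁿ` satisfy `pₙ₊₂ = pₙ₊₁ - x pₙ` with
`p₀ = 2`, `p₁ = 1`. So `pₙ` is a polynomial of degree at most `n / 2`, and only the term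
`-x p₂ᵣ` reaches `x^{r+1}` in `p₂ᵣ₊₂`, which makes the coefficient of `x^r` in `p₂ᵣ` equal to
`2 (-1)^r`. As `C` is divisible by `x`, the summand `C^{2r}` does not reach `x^r` when `r ≥ 1`.
-/

/-- The generating series `C = Σ_{n ≥ 0} catalan(n) x^{n+1}` of the Catalan numbers,
as a formal power series over `ℤ`. -/
noncomputable def catalanSeries : PowerSeries ℤ :=
  PowerSeries.mk (fun n => if n = 0 then 0 else (catalan (n - 1) : ℤ))

open PowerSeries (X coeff coeff_succ_X_mul)

section PowerSums

variable {R : Type*} [CommRing R] {a b : PowerSeries R}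

theorem pow_add_pow_add_two (hs : a + b = 1) (hp : a * b = X) (n : ℕ) :
    a ^ (n + 2) + b ^ (n + 2) = a ^ (n + 1) + b ^ (n + 1) - X * (a ^ n + b ^ n) := by
  linear_combination (a ^ (n + 1) + b ^ (n + 1)) * hs - (a ^ n + b ^ n) * hp

theorem coeff_pow_add_pow_of_lt (hs : a + b = 1) (hp : a * b = X) {n k : ℕ} (h : n < 2 * k) :
    coeff k (a ^ n + b ^ n) = 0 := by
  induction n using Nat.twoStepInduction generalizing k with
  | zero =>
    simp [one_add_one_eq_two, ← map_ofNat PowerSeries.C, PowerSeries.coeff_C, show k ≠ 0 by omega]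
  | one => simp [hs, PowerSeries.coeff_one, show k ≠ 0 by omega]
  | more n ih₀ ih₁ =>
    obtain ⟨k, rfl⟩ : ∃ j, k = j + 1 := ⟨k - 1, by omega⟩
    rw [pow_add_pow_add_two hs hp, map_sub, coeff_succ_X_mul, ih₀ (by omega), ih₁ (by omega),
      sub_zero]

theorem coeff_pow_two_mul_add_pow_two_mul (hs : a + b = 1) (hp : a * b = X) (r : ℕ) :
    coeff r (a ^ (2 * r) + b ^ (2 * r)) = 2 * (-1) ^ r := by
  induction r with
  | zero => simp [one_add_one_eq_two, ← map_ofNat PowerSeries.C]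
  | succ r ih =>
    rw [show 2 * (r + 1) = 2 * r + 2 by ring, pow_add_pow_add_two hs hp, map_sub,
      coeff_succ_X_mul, coeff_pow_add_pow_of_lt hs hp (by omega), ih]
    ring

end PowerSums

theorem catalanSeries_eq_X_mul :
    catalanSeries = X * PowerSeries.map (Nat.castRingHom ℤ) PowerSeries.catalanSeries := by
  ext n
  cases n with
  | zero => simp [catalanSeries]
  | succ n => simp [catalanSeries, coeff_succ_X_mul]

theorem one_sub_catalanSeries_mul_self : (1 - catalanSeries) * catalanSeries = X := by
  have h := congrArg (PowerSeries.map (Nat.castRingHom ℤ))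
    PowerSeries.catalanSeries_sq_mul_X_add_one
  simp only [map_add, map_mul, map_pow, map_one, PowerSeries.map_X] at h
  rw [catalanSeries_eq_X_mul]
  linear_combination (-X : PowerSeries ℤ) * h

/-- For every `r ≥ 1`, the coefficient of `x^r` in `(1 - C)^{2r}` equals `2·(-1)^r`. -/
theorem coeff_one_sub_catalanSeries_pow (r : ℕ) (hr : 1 ≤ r) :
    PowerSeries.coeff r ((1 - catalanSeries) ^ (2 * r)) = 2 * (-1) ^ r := by
  have hC : coeff r (catalanSeries ^ (2 * r)) = 0 := by
    rw [catalanSeries_eq_X_mul, mul_pow, PowerSeries.coeff_X_pow_mul', if_neg (by omega)]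
  have h := coeff_pow_two_mul_add_pow_two_mul (sub_add_cancel 1 catalanSeries)
    one_sub_catalanSeries_mul_self r
  rwa [map_add, hC, add_zero] at h
end
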